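/- Let μ be a probability distribution on subsets of [n] such that both μ and its dual μ* (defined by μ*(S) = μ([n]∖S)) have log-concave generating polynomials. Then (1/2)·Σᵢ H(μᵢ) ≤ H(μ) ≤ Σᵢ H(μᵢ), where μᵢ are the marginals of μ and H(p) = p log(1/p) + (1−p) log(1/(1−p)). -/

import Mathlib

/-- The Shannon entropy of a distribution on subsets of `[n]`
(with the convention `0 · log (1/0) = 0`, automatic since `Real.log 0 = 0`). -/
noncomputable def setEntropy {n : ℕ} (μ : Finset (Fin n) → ℝ) : ℝ :=
  ∑ S : Finset (Fin n), μ S * Real.log (1 / μ S)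

/-- The marginal probability `μᵢ = P_{S∼μ}[i ∈ S]`. -/
noncomputable def marginal {n : ℕ} (μ : Finset (Fin n) → ℝ) (i : Fin n) : ℝ :=
  ∑ S : Finset (Fin n), if i ∈ S then μ S else 0

/-- Binary entropy `H(p) = p log(1/p) + (1-p) log(1/(1-p))`. -/
noncomputable def binEntropy (p : ℝ) : ℝ :=
  p * Real.log (1 / p) + (1 - p) * Real.log (1 / (1 - p))

/-- The multiaffine generating polynomial of `μ`, as a function. -/
noncomputable def genFun {n : ℕ} (μ : Finset (Fin n) → ℝ) (z : Fin n → ℝ) : ℝ :=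
  ∑ S : Finset (Fin n), μ S * ∏ i ∈ S, z i

/-- A function on subsets of `[n]` is log-concave if its generating polynomial is a
log-concave function on the positive orthant. -/
def SetLogConcave {n : ℕ} (μ : Finset (Fin n) → ℝ) : Prop :=
  ∀ v w : Fin n → ℝ, (∀ i, 0 ≤ v i) → (∀ i, 0 ≤ w i) →
    ∀ l : ℝ, 0 ≤ l → l ≤ 1 →
      (genFun μ v) ^ l * (genFun μ w) ^ (1 - l) ≤ genFun μ (l • v + (1 - l) • w)

/-! The upper bound is Gibbs' inequality against the product measure `q` with the same
marginals as `μ`: `log (1 / q S)` splits as a sum over coordinates, and averaging it over `μ`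
gives `∑ᵢ H(μᵢ)`.

For the lower bound let `g` be the generating polynomial and `z^S` the point equal to `1/μᵢ` on
`S` and to `0` off `S`. Keeping one term, `g(z^S) ≥ μ(S) ∏_{i∈S} 1/μᵢ`; and since `log g` is
concave, Jensen gives `∑_S μ(S) log g(z^S) ≤ log g(∑_S μ(S) z^S) ≤ log g(𝟙) = 0`, because every
coordinate of `∑_S μ(S) z^S` is `μᵢ/μᵢ ≤ 1`. Together, `∑ᵢ μᵢ log(1/μᵢ) ≤ H(μ)`. Applied to
`μ*`, whose marginals are `1 - μᵢ` and whose entropy is `H(μ)`, it gives the complementary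
half of `∑ᵢ H(μᵢ)`, and the two add up to `∑ᵢ H(μᵢ) ≤ 2 H(μ)`. -/

open Finset
open Real hiding binEntropy

theorem ConcaveOn.le_map_sum_of_pos {ι E : Type*} [Fintype ι] [AddCommGroup E] [Module ℝ E]
    {s : Set E} {f : E → ℝ} (hf : ConcaveOn ℝ s f) {w : ι → ℝ} {p : ι → E}
    (hw : ∀ i, 0 ≤ w i) (hw₁ : ∑ i, w i = 1) (hp : ∀ i, 0 < w i → p i ∈ s) :
    ∑ i, w i * f (p i) ≤ f (∑ i, w i • p i) := by
  have hpos : ∀ i, w i ≠ 0 → 0 < w i := fun i hi => (hw i).lt_of_ne' hi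
  have key := hf.le_map_sum (t := univ.filter (0 < w ·)) (fun i _ => hw i)
    (by rwa [sum_filter_of_ne fun i _ hi => hpos i hi]) (fun i hi => hp i (mem_filter.1 hi).2)
  rwa [sum_filter_of_ne fun i _ hi => hpos i (left_ne_zero_of_smul hi),
    sum_filter_of_ne fun i _ hi => hpos i (left_ne_zero_of_smul hi)] at key

theorem sum_mul_log_one_div_le {ι : Type*} [Fintype ι] {w q : ι → ℝ}
    (hw : ∀ i, 0 ≤ w i) (hw₁ : ∑ i, w i = 1) (hq : ∀ i, 0 ≤ q i) (hq₁ : ∑ i, q i ≤ 1)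
    (hpos : ∀ i, 0 < w i → 0 < q i) :
    ∑ i, w i * log (1 / w i) ≤ ∑ i, w i * log (1 / q i) := by
  have jensen := strictConcaveOn_log_Ioi.concaveOn.le_map_sum_of_pos hw hw₁
    (p := fun i => q i / w i) fun i hi => div_pos (hpos i hi) hi
  have hmass : ∑ i, w i • (q i / w i) ≤ 1 := by
    refine le_trans (sum_le_sum fun i _ => ?_) hq₁
    rcases (hw i).eq_or_lt with hi | hi
    · simp [← hi, hq i]
    · rw [smul_eq_mul, mul_div_cancel₀ _ hi.ne']
  have hlog_div : ∀ i, w i * log (q i / w i) = w i * log (1 / w i) - w i * log (1 / q i) := by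
    intro i
    rcases (hw i).eq_or_lt with hi | hi
    · simp [← hi]
    · rw [log_div (hpos i hi).ne' hi.ne', one_div, one_div, log_inv, log_inv]
      ring
  have := jensen.trans (log_nonpos (sum_nonneg fun i _ => smul_nonneg (hw i)
    (div_nonneg (hq i) (hw i))) hmass)
  simp only [hlog_div, sum_sub_distrib] at this
  linarith

section SetFunction
variable {n : ℕ} {μ : Finset (Fin n) → ℝ}

theorem sum_compl_apply (μ : Finset (Fin n) → ℝ) : ∑ S, μ Sᶜ = ∑ S, μ S :=
  Equiv.sum_comp (compl_involutive.toPerm _) μ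

theorem setEntropy_compl (μ : Finset (Fin n) → ℝ) :
    setEntropy (fun S => μ Sᶜ) = setEntropy μ :=
  sum_compl_apply fun S => μ S * log (1 / μ S)

theorem marginal_nonneg (hμ : ∀ S, 0 ≤ μ S) (i : Fin n) : 0 ≤ marginal μ i :=
  sum_nonneg fun S _ => by split_ifs <;> simp [hμ S]

theorem marginal_pos_of_mem (hμ : ∀ S, 0 ≤ μ S) {S : Finset (Fin n)} (hS : 0 < μ S) {i : Fin n}
    (hi : i ∈ S) : 0 < marginal μ i := by
  have h := single_le_sum (f := fun T => if i ∈ T then μ T else 0)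
    (fun T _ => by split_ifs <;> simp [hμ T]) (mem_univ S)
  rw [if_pos hi] at h
  exact hS.trans_le h

theorem marginal_compl (μ : Finset (Fin n) → ℝ) (i : Fin n) :
    marginal (fun S => μ Sᶜ) i = ∑ S, μ S - marginal μ i := by
  rw [marginal, marginal, ← sum_sub_distrib]
  exact Fintype.sum_equiv (compl_involutive.toPerm _) _ _ fun S => by
    by_cases hi : i ∈ S <;> simp [hi]

theorem sum_mul_sum_eq_sum_marginal_mul (μ : Finset (Fin n) → ℝ) (f : Fin n → ℝ) :
    ∑ S, μ S * ∑ i ∈ S, f i = ∑ i, marginal μ i * f i := by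
  simp only [marginal, sum_mul, mul_sum, ite_mul, zero_mul]
  rw [sum_comm]
  exact sum_congr rfl fun S _ => by rw [sum_ite_mem, univ_inter]

theorem sum_mul_sum_compl_eq (μ : Finset (Fin n) → ℝ) (f : Fin n → ℝ) :
    ∑ S, μ S * ∑ i ∈ Sᶜ, f i = ∑ i, (∑ S, μ S - marginal μ i) * f i := by
  simp only [← marginal_compl]
  rw [← sum_mul_sum_eq_sum_marginal_mul, ← Equiv.sum_comp (compl_involutive.toPerm _)]
  simp

theorem genFun_nonneg (hμ : ∀ S, 0 ≤ μ S) {z : Fin n → ℝ} (hz : ∀ i, 0 ≤ z i) :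
    0 ≤ genFun μ z :=
  sum_nonneg fun S _ => mul_nonneg (hμ S) (prod_nonneg fun i _ => hz i)

theorem mul_prod_le_genFun (hμ : ∀ S, 0 ≤ μ S) {z : Fin n → ℝ} (hz : ∀ i, 0 ≤ z i)
    (S : Finset (Fin n)) : μ S * ∏ i ∈ S, z i ≤ genFun μ z :=
  single_le_sum (f := fun T => μ T * ∏ i ∈ T, z i)
    (fun T _ => mul_nonneg (hμ T) (prod_nonneg fun i _ => hz i)) (mem_univ S)

theorem genFun_le_sum (hμ : ∀ S, 0 ≤ μ S) {z : Fin n → ℝ} (hz₀ : ∀ i, 0 ≤ z i)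
    (hz₁ : ∀ i, z i ≤ 1) : genFun μ z ≤ ∑ S, μ S :=
  sum_le_sum fun S _ => mul_le_of_le_one_right (hμ S)
    (prod_le_one (fun i _ => hz₀ i) fun i _ => hz₁ i)

theorem SetLogConcave.concaveOn_log_genFun (hlc : SetLogConcave μ) :
    ConcaveOn ℝ {z | (∀ i, 0 ≤ z i) ∧ 0 < genFun μ z} (fun z => log (genFun μ z)) := by
  have key : ∀ x y : Fin n → ℝ, (∀ i, 0 ≤ x i) ∧ 0 < genFun μ x →
      (∀ i, 0 ≤ y i) ∧ 0 < genFun μ y → ∀ a : ℝ, 0 ≤ a → a ≤ 1 →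
      0 < genFun μ x ^ a * genFun μ y ^ (1 - a) ∧
        genFun μ x ^ a * genFun μ y ^ (1 - a) ≤ genFun μ (a • x + (1 - a) • y) :=
    fun x y hx hy a ha ha₁ => ⟨by have := hx.2; have := hy.2; positivity,
      hlc x y hx.1 hy.1 a ha ha₁⟩
  refine ⟨?_, fun x hx y hy a b ha hb hab => ?_⟩
  · intro x hx y hy a b ha hb hab
    obtain rfl : b = 1 - a := by linarith
    obtain ⟨hpos, hmean⟩ := key x y hx hy a ha (by linarith)
    exact ⟨fun i => add_nonneg (mul_nonneg ha (hx.1 i)) (mul_nonneg hb (hy.1 i)),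
      hpos.trans_le hmean⟩
  · obtain rfl : b = 1 - a := by linarith
    obtain ⟨hpos, hmean⟩ := key x y hx hy a ha (by linarith)
    calc a • log (genFun μ x) + (1 - a) • log (genFun μ y)
        = log (genFun μ x ^ a * genFun μ y ^ (1 - a)) := by
          rw [log_mul (rpow_pos_of_pos hx.2 a).ne' (rpow_pos_of_pos hy.2 _).ne',
            log_rpow hx.2, log_rpow hy.2, smul_eq_mul, smul_eq_mul]
      _ ≤ log (genFun μ (a • x + (1 - a) • y)) := log_le_log hpos hmean

/-- The point `z^S` of the lower bound. -/
noncomputable def invMarginalOn (μ : Finset (Fin n) → ℝ) (S : Finset (Fin n)) : Fin n → ℝ :=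
  fun i => if i ∈ S then (marginal μ i)⁻¹ else 0

theorem invMarginalOn_nonneg (hμ : ∀ S, 0 ≤ μ S) (S : Finset (Fin n)) (i : Fin n) :
    0 ≤ invMarginalOn μ S i := by
  unfold invMarginalOn
  split_ifs
  exacts [inv_nonneg.2 (marginal_nonneg hμ i), le_rfl]

theorem mul_prod_inv_marginal_le_genFun_invMarginalOn (hμ : ∀ S, 0 ≤ μ S)
    (S : Finset (Fin n)) : μ S * ∏ i ∈ S, (marginal μ i)⁻¹ ≤ genFun μ (invMarginalOn μ S) := by
  have hprod : ∏ i ∈ S, invMarginalOn μ S i = ∏ i ∈ S, (marginal μ i)⁻¹ :=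
    prod_congr rfl fun i hi => if_pos hi
  exact hprod ▸ mul_prod_le_genFun hμ (invMarginalOn_nonneg hμ S) S

theorem sum_smul_invMarginalOn_apply_le_one (μ : Finset (Fin n) → ℝ) (j : Fin n) :
    (∑ S, μ S • invMarginalOn μ S) j ≤ 1 :=
  calc (∑ S, μ S • invMarginalOn μ S) j
      = ∑ S, (if j ∈ S then μ S else 0) * (marginal μ j)⁻¹ := by
        rw [Finset.sum_apply]
        refine sum_congr rfl fun S _ => ?_
        simp only [Pi.smul_apply, smul_eq_mul, invMarginalOn, mul_ite, ite_mul, mul_zero, zero_mul]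
    _ = marginal μ j * (marginal μ j)⁻¹ := by rw [← sum_mul]; rfl
    _ ≤ 1 := mul_inv_le_one

theorem SetLogConcave.sum_marginal_mul_log_le_setEntropy (hlc : SetLogConcave μ)
    (hμ : ∀ S, 0 ≤ μ S) (hμ₁ : ∑ S, μ S = 1) :
    ∑ i, marginal μ i * log (1 / marginal μ i) ≤ setEntropy μ := by
  have hwitness : ∀ S, 0 < μ S → 0 < μ S * ∏ i ∈ S, (marginal μ i)⁻¹ := fun S hS =>
    mul_pos hS (prod_pos fun i hi => inv_pos.2 (marginal_pos_of_mem hμ hS hi))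
  have hterm : ∀ S, μ S * (log (μ S) + ∑ i ∈ S, log (1 / marginal μ i)) ≤
      μ S * log (genFun μ (invMarginalOn μ S)) := by
    intro S
    rcases (hμ S).eq_or_lt with hS | hS
    · simp [← hS]
    have hinv : ∀ i ∈ S, (marginal μ i)⁻¹ ≠ 0 := fun i hi =>
      (inv_pos.2 (marginal_pos_of_mem hμ hS hi)).ne'
    refine mul_le_mul_of_nonneg_left ?_ hS.le
    calc log (μ S) + ∑ i ∈ S, log (1 / marginal μ i)
        = log (μ S * ∏ i ∈ S, (marginal μ i)⁻¹) := by
          rw [log_mul hS.ne' (prod_ne_zero_iff.2 hinv), log_prod hinv]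
          simp only [one_div]
      _ ≤ log (genFun μ (invMarginalOn μ S)) :=
          log_le_log (hwitness S hS) (mul_prod_inv_marginal_le_genFun_invMarginalOn hμ S)
  have hcenter_nonneg : ∀ j, 0 ≤ (∑ S, μ S • invMarginalOn μ S) j := fun j => by
    simp only [Finset.sum_apply, Pi.smul_apply, smul_eq_mul]
    exact sum_nonneg fun S _ => mul_nonneg (hμ S) (invMarginalOn_nonneg hμ S j)
  have hjensen : ∑ S, μ S * log (genFun μ (invMarginalOn μ S)) ≤ 0 :=
    (hlc.concaveOn_log_genFun.le_map_sum_of_pos hμ hμ₁ fun S hS =>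
      ⟨invMarginalOn_nonneg hμ S, (hwitness S hS).trans_le
        (mul_prod_inv_marginal_le_genFun_invMarginalOn hμ S)⟩).trans <|
      log_nonpos (genFun_nonneg hμ hcenter_nonneg) <|
        (genFun_le_sum hμ hcenter_nonneg (sum_smul_invMarginalOn_apply_le_one μ)).trans hμ₁.le
  have hsplit : ∑ S, μ S * (log (μ S) + ∑ i ∈ S, log (1 / marginal μ i)) =
      ∑ i, marginal μ i * log (1 / marginal μ i) - setEntropy μ := by
    simp only [mul_add, sum_add_distrib, sum_mul_sum_eq_sum_marginal_mul, setEntropy, one_div,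
      log_inv, mul_neg, sum_neg_distrib]
    ring
  linarith [sum_le_sum fun S (_ : S ∈ univ) => hterm S]

theorem setEntropy_le_sum_binEntropy (hμ : ∀ S, 0 ≤ μ S) (hμ₁ : ∑ S, μ S = 1) :
    setEntropy μ ≤ ∑ i, binEntropy (marginal μ i) := by
  have hcompl : ∀ i, 1 - marginal μ i = marginal (fun S => μ Sᶜ) i := fun i => by
    rw [marginal_compl, hμ₁]
  have hm_pos : ∀ S, 0 < μ S → (∀ i ∈ S, 0 < marginal μ i) ∧ ∀ i ∈ Sᶜ, 0 < 1 - marginal μ i :=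
    fun S hS => ⟨fun i hi => marginal_pos_of_mem hμ hS hi, fun i hi => hcompl i ▸
      marginal_pos_of_mem (fun T => hμ Tᶜ) (by rwa [compl_compl]) hi⟩
  set q : Finset (Fin n) → ℝ := fun S => (∏ i ∈ S, marginal μ i) * ∏ i ∈ Sᶜ, (1 - marginal μ i)
  have hq₀ : ∀ S, 0 ≤ q S := fun S =>
    mul_nonneg (prod_nonneg fun i _ => marginal_nonneg hμ i) (prod_nonneg fun i _ =>
      hcompl i ▸ marginal_nonneg (fun T => hμ Tᶜ) i)
  have hq₁ : ∑ S, q S = 1 := by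
    have := prod_add (marginal μ) (fun i => 1 - marginal μ i) univ
    simp only [add_sub_cancel, prod_const_one, powerset_univ, ← compl_eq_univ_sdiff] at this
    exact this.symm
  have hq_pos : ∀ S, 0 < μ S → 0 < q S := fun S hS =>
    mul_pos (prod_pos (hm_pos S hS).1) (prod_pos (hm_pos S hS).2)
  have hlog : ∀ S, μ S * log (1 / q S) = μ S * (∑ i ∈ S, log (1 / marginal μ i) +
      ∑ i ∈ Sᶜ, log (1 / (1 - marginal μ i))) := by
    intro S
    rcases (hμ S).eq_or_lt with hS | hS
    · simp [← hS]
    obtain ⟨hin, hout⟩ := hm_pos S hS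
    rw [one_div, log_inv, log_mul (prod_pos hin).ne' (prod_pos hout).ne',
      log_prod fun i hi => (hin i hi).ne', log_prod fun i hi => (hout i hi).ne']
    simp only [one_div, log_inv, sum_neg_distrib]
    ring
  calc setEntropy μ ≤ ∑ S, μ S * log (1 / q S) := sum_mul_log_one_div_le hμ hμ₁ hq₀ hq₁.le hq_pos
    _ = ∑ i, binEntropy (marginal μ i) := by
      simp only [hlog, mul_add, sum_add_distrib, sum_mul_sum_eq_sum_marginal_mul,
        sum_mul_sum_compl_eq, hμ₁, binEntropy]

end SetFunction

/-- If both `μ` and its dual `μ*` (with `μ*(S) = μ([n]∖S)`) have log-concave generating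
polynomials, then `(1/2) ∑ᵢ H(μᵢ) ≤ H(μ) ≤ ∑ᵢ H(μᵢ)`. -/
theorem setEntropy_factor_two_approx
    {n : ℕ} (μ : Finset (Fin n) → ℝ)
    (hnn : ∀ S, 0 ≤ μ S) (hsum : ∑ S : Finset (Fin n), μ S = 1)
    (hlc : SetLogConcave μ)
    (hlcdual : SetLogConcave (fun S => μ Sᶜ)) :
    (1 / 2) * ∑ i : Fin n, binEntropy (marginal μ i) ≤ setEntropy μ ∧
      setEntropy μ ≤ ∑ i : Fin n, binEntropy (marginal μ i) := by
  have lower := hlc.sum_marginal_mul_log_le_setEntropy hnn hsum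
  have lower_dual := hlcdual.sum_marginal_mul_log_le_setEntropy (fun S => hnn Sᶜ)
    ((sum_compl_apply μ).trans hsum)
  rw [setEntropy_compl] at lower_dual
  simp only [marginal_compl, hsum] at lower_dual
  refine ⟨?_, setEntropy_le_sum_binEntropy hnn hsum⟩
  simp only [binEntropy, sum_add_distrib]
  linarith
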